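/- Let A be a unital C*-algebra and x, z ∈ A with ‖x‖ ≤ 1 and ‖z‖ ≤ 1. Then z = star x if and only if for every real number t, the 2×2 matrix !![t • 1, x; −z, t • 1] over A has norm at most √(1 + t²). -/
import Mathlib


/-- The canonical C*-matrix norm on matrices over a C*-algebra `A`, obtained by viewing an
`m × n` matrix as an operator between the Hilbert C*-modules `A^n` and `A^m` (as in
Mathlib's `CStarMatrix`).  For square matrices this is the unique C*-algebra norm. -/
noncomputable def cstarMatrixNorm {A : Type*} [NonUnitalNormedRing A] [StarRing A]
    {m n : ℕ} (M : Matrix (Fin m) (Fin n) A) : ℝ :=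
  sSup {r : ℝ | ∃ v : Fin n → A, ‖∑ i, star (v i) * v i‖ ≤ 1 ∧
    r = Real.sqrt ‖∑ j, star (M.mulVec v j) * M.mulVec v j‖}

section Aux

variable {A : Type*} [CStarAlgebra A]

private lemma mulVec_fin2 (M : Matrix (Fin 2) (Fin 2) A) (v : Fin 2 → A) (j : Fin 2) :
    M.mulVec v j = M j 0 * v 0 + M j 1 * v 1 := by
  simp [Matrix.mulVec, dotProduct, Fin.sum_univ_two]

private lemma norm_one_le : ‖(1 : A)‖ ≤ 1 := by
  have h := CStarRing.norm_star_mul_self (x := (1 : A))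
  rw [star_one, one_mul] at h
  nlinarith [norm_nonneg (1 : A)]

private lemma key_identity (x a b : A) (t : ℝ) :
    star (t • a + x * b) * (t • a + x * b)
      + star (-(star x * a) + t • b) * (-(star x * a) + t • b)
    = t ^ 2 • (star a * a + star b * b)
      + (star a * (x * star x) * a + star b * (star x * x) * b) := by
  simp only [star_add, star_mul, star_neg, star_star, star_smul, star_trivial,
    mul_add, add_mul, smul_add, neg_mul, mul_neg, neg_neg, smul_mul_assoc, mul_smul_comm,
    smul_smul, smul_neg, neg_smul, mul_assoc, pow_two, mul_neg_one, neg_one_mul]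
  abel

private lemma key_identity2 (x z : A) (t : ℝ) (μ : ℂ) (hμ : star μ * μ = 1)
    (d : ℂ) (hd : star d = d) (hd2 : d * d = 2⁻¹) :
    star ((t • (1:A)) * (d • 1) + x * ((d * μ) • 1)) * ((t • (1:A)) * (d • 1) + x * ((d * μ) • 1))
      + star ((-z) * (d • 1) + (t • (1:A)) * ((d * μ) • 1))
          * ((-z) * (d • 1) + (t • (1:A)) * ((d * μ) • 1))
    = t ^ 2 • (1:A) + t • ((2⁻¹ : ℂ) • (μ • star (star x - z) + star μ • (star x - z)))
        + (2⁻¹ : ℂ) • (star x * x + star z * z) := by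
  simp only [star_add, star_mul, star_neg, star_star, star_smul, star_trivial, star_one,
    mul_add, add_mul, smul_add, sub_eq_add_neg, smul_sub, neg_mul, mul_neg, neg_neg,
    smul_mul_assoc, mul_smul_comm, smul_smul, smul_neg, neg_smul,
    mul_one, one_mul, mul_assoc, pow_two]
  match_scalars
  all_goals rw [hd]
  all_goals try simp only [Complex.coe_algebraMap]
  all_goals first
    | linear_combination ((t:ℂ)^2 + (t:ℂ)^2*μ*(star μ)) * hd2 + ((t:ℂ)^2/2) * hμ
    | linear_combination ((t:ℂ)*(star μ)) * hd2
    | linear_combination ((t:ℂ)*μ) * hd2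
    | linear_combination (μ*(star μ)) * hd2 + (2⁻¹:ℂ) * hμ
    | linear_combination hd2
    | linear_combination (-(t:ℂ)*(star μ)) * hd2
    | linear_combination (-μ*(t:ℂ)) * hd2

section Order

variable [PartialOrder A] [StarOrderedRing A]

private lemma algdMono {r s : ℝ} (h : r ≤ s) : algebraMap ℝ A r ≤ algebraMap ℝ A s := by
  have h1 : (0 : A) ≤ 1 := by simpa using  star_mul_self_nonneg (1 : A)
  have h2 := smul_le_smul_of_nonneg_left h1 (sub_nonneg.mpr h)
  rw [smul_zero] at h2
  calc algebraMap ℝ A r = r • 1 := Algebra.algebraMap_eq_smul_one r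
    _ ≤ r • 1 + (s - r) • (1 : A) := le_add_of_nonneg_right h2
    _ = s • 1 := by rw [← add_smul]; ring_nf
    _ = algebraMap ℝ A s := (Algebra.algebraMap_eq_smul_one s).symm

private lemma spec_nonpos (h : A) (hsa : IsSelfAdjoint h) (hle : ∀ t : ℝ, t • h ≤ 1) :
    ∀ μ ∈ spectrum ℝ h, μ ≤ 0 := by
  intro μ hμ
  have key : ∀ ε : ℝ, 0 < ε → μ ≤ ε := by
    intro ε hε
    have h1 : (ε⁻¹ : ℝ) • h ≤ 1 := hle ε⁻¹
    have h2 := smul_le_smul_of_nonneg_left h1 hε.le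
    rw [smul_smul, mul_inv_cancel₀ hε.ne', one_smul] at h2
    rw [show (ε • (1:A)) = algebraMap ℝ A ε from (Algebra.algebraMap_eq_smul_one ε).symm] at h2
    exact (le_algebraMap_iff_spectrum_le (R := ℝ) (a := h) hsa).mp h2 μ hμ
  by_contra h'
  push_neg at h'
  linarith [key (μ / 2) (by linarith)]

private lemma eq_zero_of_smul_le_one (h : A) (hsa : IsSelfAdjoint h)
    (hle : ∀ t : ℝ, t • h ≤ 1) : h = 0 := by
  have h1 := spec_nonpos h hsa hle
  have h2 : ∀ μ ∈ spectrum ℝ (-h), μ ≤ 0 := by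
    refine spec_nonpos (-h) hsa.neg (fun t => ?_)
    have := hle (-t)
    rwa [neg_smul, ← smul_neg] at this
  rcases subsingleton_or_nontrivial A with hs | hn
  · exact Subsingleton.elim h 0
  · rw [← norm_le_zero_iff]
    rcases CStarAlgebra.norm_or_neg_norm_mem_spectrum hsa with hm | hm
    · exact h1 _ hm
    · refine h2 _ ?_
      rw [← spectrum.neg_eq]
      simpa using hm
  
private lemma norm_comp_le (v : Fin 2 → A)
    (hv : ‖star (v 0) * v 0 + star (v 1) * v 1‖ ≤ 1) (i : Fin 2) : ‖v i‖ ≤ 1 := by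
  have hle : star (v i) * v i ≤ star (v 0) * v 0 + star (v 1) * v 1 := by
    fin_cases i
    · exact le_add_of_nonneg_right (star_mul_self_nonneg _)
    · exact le_add_of_nonneg_left (star_mul_self_nonneg _)
  have h1 : ‖star (v i) * v i‖ ≤ 1 :=
    (CStarAlgebra.norm_le_norm_of_nonneg_of_le (star_mul_self_nonneg _) hle).trans hv
  rw [CStarRing.norm_star_mul_self] at h1
  nlinarith [norm_nonneg (v i)]

private lemma bddAbove_aux (M : Matrix (Fin 2) (Fin 2) A) :
    BddAbove {r : ℝ | ∃ v : Fin 2 → A, ‖∑ i, star (v i) * v i‖ ≤ 1 ∧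
      r = Real.sqrt ‖∑ j, star (M.mulVec v j) * M.mulVec v j‖} := by
  refine ⟨Real.sqrt ((‖M 0 0‖ + ‖M 0 1‖) ^ 2 + (‖M 1 0‖ + ‖M 1 1‖) ^ 2), ?_⟩
  rintro r ⟨v, hv, rfl⟩
  rw [Fin.sum_univ_two] at hv
  apply Real.sqrt_le_sqrt
  rw [Fin.sum_univ_two]
  have hb : ∀ j : Fin 2, ‖M.mulVec v j‖ ≤ ‖M j 0‖ + ‖M j 1‖ := by
    intro j
    rw [mulVec_fin2]
    calc ‖M j 0 * v 0 + M j 1 * v 1‖ ≤ ‖M j 0 * v 0‖ + ‖M j 1 * v 1‖ := norm_add_le _ _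
      _ ≤ ‖M j 0‖ * ‖v 0‖ + ‖M j 1‖ * ‖v 1‖ := by gcongr <;> exact norm_mul_le _ _
      _ ≤ ‖M j 0‖ * 1 + ‖M j 1‖ * 1 := by
          gcongr <;> first | exact norm_comp_le v hv 0 | exact norm_comp_le v hv 1
      _ = ‖M j 0‖ + ‖M j 1‖ := by ring
  calc ‖star (M.mulVec v 0) * M.mulVec v 0 + star (M.mulVec v 1) * M.mulVec v 1‖
      ≤ ‖star (M.mulVec v 0) * M.mulVec v 0‖ + ‖star (M.mulVec v 1) * M.mulVec v 1‖ :=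
        norm_add_le _ _
    _ = ‖M.mulVec v 0‖ * ‖M.mulVec v 0‖ + ‖M.mulVec v 1‖ * ‖M.mulVec v 1‖ := by
        rw [CStarRing.norm_star_mul_self, CStarRing.norm_star_mul_self]
    _ ≤ (‖M 0 0‖ + ‖M 0 1‖) ^ 2 + (‖M 1 0‖ + ‖M 1 1‖) ^ 2 := by
        have h0 := hb 0; have h1 := hb 1
        nlinarith [norm_nonneg (M.mulVec v 0), norm_nonneg (M.mulVec v 1)]

end Order

end Aux

/-- The metric characterization of the adjoint (Remark 3.5 3(c) of \cite{BN}, quoted in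
Section 6): for contractions `x, z` in a unital C*-algebra, `z = x*` iff
`‖!![t·1, x; -z, t·1]‖ ≤ √(1 + t²)` for every real `t`. -/
theorem adjoint_iff_matrix_norm {A : Type*} [CStarAlgebra A] (x z : A)
    (hx : ‖x‖ ≤ 1) (hz : ‖z‖ ≤ 1) :
    z = star x ↔
      ∀ t : ℝ, cstarMatrixNorm !![t • (1 : A), x; -z, t • (1 : A)] ≤ Real.sqrt (1 + t ^ 2) := by
  letI := CStarAlgebra.spectralOrder A
  haveI := CStarAlgebra.spectralOrderedRing A
  constructor
  · rintro rfl t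
    rw [cstarMatrixNorm]
    apply Real.sSup_le _ (Real.sqrt_nonneg _)
    rintro r ⟨v, hv, rfl⟩
    apply Real.sqrt_le_sqrt
    rw [Fin.sum_univ_two] at hv ⊢
    have hmv0 : (!![t • (1 : A), x; -(star x), t • (1 : A)]).mulVec v 0
        = t • v 0 + x * v 1 := by
      rw [mulVec_fin2]; simp [smul_mul_assoc]
    have hmv1 : (!![t • (1 : A), x; -(star x), t • (1 : A)]).mulVec v 1
        = -(star x * v 0) + t • v 1 := by
      rw [mulVec_fin2]; simp [smul_mul_assoc]
    rw [hmv0, hmv1, key_identity]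
    -- now bound the norm
    have hxx : x * star x ≤ (1 : A) := by
      have h1 : ‖x * star x‖ ≤ 1 := by
        rw [CStarRing.norm_self_mul_star]; nlinarith [norm_nonneg x]
      have := (CStarAlgebra.norm_le_iff_le_algebraMap (x * star x) zero_le_one
        (mul_star_self_nonneg x)).mp h1
      rwa [map_one] at this
    have hxx' : star x * x ≤ (1 : A) := by
      have h1 : ‖star x * x‖ ≤ 1 := by
        rw [CStarRing.norm_star_mul_self]; nlinarith [norm_nonneg x]
      have := (CStarAlgebra.norm_le_iff_le_algebraMap (star x * x) zero_le_one
        (star_mul_self_nonneg x)).mp h1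
      rwa [map_one] at this
    set K := star (v 0) * v 0 + star (v 1) * v 1 with hK
    have hKnn : (0 : A) ≤ K := add_nonneg (star_mul_self_nonneg _) (star_mul_self_nonneg _)
    have hle : t ^ 2 • K + (star (v 0) * (x * star x) * v 0 + star (v 1) * (star x * x) * v 1)
        ≤ t ^ 2 • K + K := by
      have c0 : star (v 0) * (x * star x) * v 0 ≤ star (v 0) * 1 * v 0 :=
        star_left_conjugate_le_conjugate hxx (v 0)
      have c1 : star (v 1) * (star x * x) * v 1 ≤ star (v 1) * 1 * v 1 :=
        star_left_conjugate_le_conjugate hxx' (v 1)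
      rw [mul_one] at c0 c1
      exact add_le_add le_rfl (by rw [hK]; exact add_le_add c0 c1)
    have hnn : (0 : A) ≤ t ^ 2 • K
        + (star (v 0) * (x * star x) * v 0 + star (v 1) * (star x * x) * v 1) := by
      refine add_nonneg ?_ (add_nonneg ?_ ?_)
      · have := smul_le_smul_of_nonneg_left hKnn (sq_nonneg t)
        rwa [smul_zero] at this
      · simpa [mul_assoc] using star_left_conjugate_nonneg (mul_star_self_nonneg x) (v 0)
      · simpa [mul_assoc] using star_left_conjugate_nonneg (star_mul_self_nonneg x) (v 1)
    calc ‖t ^ 2 • K + (star (v 0) * (x * star x) * v 0 + star (v 1) * (star x * x) * v 1)‖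
        ≤ ‖t ^ 2 • K + K‖ := CStarAlgebra.norm_le_norm_of_nonneg_of_le hnn hle
      _ = ‖(1 + t ^ 2) • K‖ := by rw [add_smul, one_smul, add_comm (t ^ 2 • K) K]
      _ = |1 + t ^ 2| * ‖K‖ := by rw [norm_smul, Real.norm_eq_abs]
      _ ≤ (1 + t ^ 2) * 1 := by
          rw [abs_of_pos (by positivity)]
          exact mul_le_mul_of_nonneg_left hv (by positivity)
      _ = 1 + t ^ 2 := mul_one _
  · intro hyp
    set w := star x - z with hw
    have key : ∀ μ : ℂ, star μ * μ = 1 →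
        (2⁻¹ : ℂ) • (μ • star w + star μ • w) = 0 := by
      intro μ hμ
      set h : A := (2⁻¹ : ℂ) • (μ • star w + star μ • w) with hh
      have hsa : IsSelfAdjoint h := by
        rw [IsSelfAdjoint, hh]
        simp only [star_smul, star_add, star_star]
        rw [add_comm (star μ • w)]
        congr 1
        simp [Complex.star_def, map_inv₀]
      refine eq_zero_of_smul_le_one h hsa (fun t => ?_)
      -- set up the vector
      set d : ℂ := (((Real.sqrt 2)⁻¹ : ℝ) : ℂ) with hdd
      have hd : star d = d := by rw [hdd]; exact Complex.conj_ofReal _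
      have hd2 : d * d = 2⁻¹ := by
        rw [hdd]
        rw [← Complex.ofReal_mul, ← mul_inv, Real.mul_self_sqrt (by norm_num)]
        norm_num
      set v : Fin 2 → A := ![d • 1, (d * μ) • 1] with hv
      have hv0 : v 0 = d • 1 := rfl
      have hv1 : v 1 = (d * μ) • 1 := rfl
      have hinner : ∑ i, star (v i) * v i = (1 : A) := by
        rw [Fin.sum_univ_two, hv0, hv1]
        rw [star_smul, star_smul, smul_mul_smul_comm, smul_mul_smul_comm, star_one, one_mul,
          hd]
        rw [← add_smul]
        have : d * d + star (d * μ) * (d * μ) = 1 := by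
          rw [star_mul, hd]
          calc d * d + star μ * d * (d * μ) = d * d + (d * d) * (star μ * μ) := by ring
            _ = 1 := by rw [hd2, hμ]; norm_num
        rw [this, one_smul]
      have hmem : Real.sqrt ‖∑ j, star ((!![t • (1 : A), x; -z, t • (1 : A)]).mulVec v j)
          * (!![t • (1 : A), x; -z, t • (1 : A)]).mulVec v j‖
          ∈ {r : ℝ | ∃ v : Fin 2 → A, ‖∑ i, star (v i) * v i‖ ≤ 1 ∧
            r = Real.sqrt ‖∑ j, star ((!![t • (1 : A), x; -z, t • (1 : A)]).mulVec v j)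
              * (!![t • (1 : A), x; -z, t • (1 : A)]).mulVec v j‖} := by
        exact ⟨v, by rw [hinner]; exact norm_one_le, rfl⟩
      have hsup := (le_csSup (bddAbove_aux _) hmem).trans (hyp t)
      have hnorm : ‖∑ j, star ((!![t • (1 : A), x; -z, t • (1 : A)]).mulVec v j)
          * (!![t • (1 : A), x; -z, t • (1 : A)]).mulVec v j‖ ≤ 1 + t ^ 2 :=
        (Real.sqrt_le_sqrt_iff (by positivity)).mp hsup
      -- identify the sum
      have hexp : ∑ j, star ((!![t • (1 : A), x; -z, t • (1 : A)]).mulVec v j)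
          * (!![t • (1 : A), x; -z, t • (1 : A)]).mulVec v j
          = t ^ 2 • (1 : A) + t • h + (2⁻¹ : ℂ) • (star x * x + star z * z) := by
        rw [Fin.sum_univ_two, mulVec_fin2, mulVec_fin2, hv0, hv1]
        have e00 : (!![t • (1 : A), x; -z, t • (1 : A)]) 0 0 = t • (1 : A) := by simp
        have e01 : (!![t • (1 : A), x; -z, t • (1 : A)]) 0 1 = x := by simp
        have e10 : (!![t • (1 : A), x; -z, t • (1 : A)]) 1 0 = -z := by simp
        have e11 : (!![t • (1 : A), x; -z, t • (1 : A)]) 1 1 = t • (1 : A) := by simp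
        rw [e00, e01, e10, e11, hh, hw]
        exact key_identity2 x z t μ hμ d hd hd2
      rw [hexp] at hnorm
      -- derive t • h ≤ 1
      set p : A := (2⁻¹ : ℂ) • (star x * x + star z * z) with hp
      have hpnn : (0 : A) ≤ p := by
        have h1 : (0 : A) ≤ star x * x + star z * z :=
          add_nonneg (star_mul_self_nonneg _) (star_mul_self_nonneg _)
        have h2 := smul_le_smul_of_nonneg_left h1 (by norm_num : (0:ℝ) ≤ 2⁻¹)
        rw [smul_zero] at h2
        rw [hp, show ((2⁻¹ : ℂ) • (star x * x + star z * z))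
          = (2⁻¹ : ℝ) • (star x * x + star z * z) by
            rw [show ((2⁻¹ : ℂ)) = ((2⁻¹ : ℝ) : ℂ) by norm_num]
            rw [Complex.coe_smul]]
        exact h2
      have hpsa : IsSelfAdjoint p := by
        rw [IsSelfAdjoint, hp]
        simp only [star_smul, star_add, star_mul, star_star]
        congr 1
        simp [Complex.star_def, map_inv₀]
      have hasa : IsSelfAdjoint (t ^ 2 • (1 : A) + t • h + p) := by
        rw [IsSelfAdjoint]
        simp only [star_add, star_smul, star_trivial, star_one, hsa.star_eq, hpsa.star_eq]
      have hle1 : t ^ 2 • (1 : A) + t • h + p ≤ algebraMap ℝ A (1 + t ^ 2) :=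
        (hasa.le_algebraMap_norm_self).trans (algdMono hnorm)
      rw [Algebra.algebraMap_eq_smul_one] at hle1
      have hle2 : t • h + (t ^ 2 • (1 : A) + p) ≤ (1 + t ^ 2) • (1 : A) := by
        calc t • h + (t ^ 2 • (1 : A) + p) = t ^ 2 • (1 : A) + t • h + p := by abel
          _ ≤ (1 + t ^ 2) • (1 : A) := hle1
      have hle3 : t • h ≤ (1 + t ^ 2) • (1 : A) - (t ^ 2 • (1 : A) + p) :=
        le_sub_iff_add_le.mpr hle2
      have hfin : (1 + t ^ 2) • (1 : A) - (t ^ 2 • (1 : A) + p) ≤ 1 := by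
        have : (1 + t ^ 2) • (1 : A) - t ^ 2 • (1 : A) = (1 : A) := by
          rw [add_smul, one_smul]; abel
        calc (1 + t ^ 2) • (1 : A) - (t ^ 2 • (1 : A) + p)
            = ((1 + t ^ 2) • (1 : A) - t ^ 2 • (1 : A)) - p := by abel
          _ = (1 : A) - p := by rw [this]
          _ ≤ 1 := sub_le_self _ hpnn
      exact hle3.trans hfin
    -- now use μ = 1 and μ = I
    have k1 := key 1 (by norm_num)
    have kI := key Complex.I (by simp [Complex.star_def, Complex.conj_I])
    simp only [one_smul, star_one] at k1
    have e1 : star w + w = 0 := by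
      have := congrArg (fun y => (2 : ℂ) • y) k1
      simpa [smul_smul] using this
    have eI : star w - w = 0 := by
      rw [Complex.star_def, Complex.conj_I] at kI
      have h2 : Complex.I • star w - Complex.I • w = 0 := by
        have := congrArg (fun y => (2 : ℂ) • y) kI
        simpa [smul_smul, smul_add, neg_smul, sub_eq_add_neg] using this
      have := congrArg (fun y => (-Complex.I) • y) h2
      simpa [smul_sub, smul_smul, Complex.I_mul_I] using this
    have hw0 : w = 0 := by
      have h3 : w + w = 0 := by
        have := congrArg (fun y => y - (star w - w)) (e1.trans eI.symm) -- junk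
        linear_combination (norm := abel) e1 - eI
      have := congrArg (fun y => (2⁻¹ : ℂ) • y) (show (2 : ℂ) • w = 0 by
        rw [two_smul]; exact h3)
      simpa [smul_smul] using this
    rw [hw, sub_eq_zero] at hw0
    exact hw0.symm
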